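/- Let M be an n-dimensional (N(k),ξ)-semi-Riemannian manifold such that a₄ ≠ 0 and a₄+(n−1)a₇ ≠ 0. If M satisfies S = D₂ g + D₃ η⊗η, where D₂ = −(k a₀ + k(n−1)a₁ + a₇ r)/a₄ and D₃ = (k a₀ − (n−1)k(a₂+a₃+a₅+a₆) + a₇ r)/(ε a₄), and D₁ = −k(n−1)(a₀ + n a₁ + a₂ + a₃ + a₅ + a₆)/(a₄ + (n−1)a₇), then 𝒯_a(X,Y)ξ = (εka₀ + εk(n−1)a₁ + εa₄D₂ + εa₇D₁)η(Y)X + (−εka₀ + εk(n−1)a₂ + εa₅D₂ − εa₇D₁)η(X)Y + (k(n−1)a₆ + a₃D₂)g(X,Y)ξ + (a₃+a₄+a₅)D₃ η(X)η(Y)ξ for all vector fields X,Y. -/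
import Mathlib


open Finset

/-- An algebraic (pointwise) model of an `n`-dimensional semi-Riemannian manifold:
a real vector space of tangent vectors together with a metric `g`, an orthonormal
frame `e` with signs `eps`, and a Riemann curvature tensor `R` satisfying the
standard curvature symmetries.  The Ricci tensor `S`, the Ricci operator `Q` and
the scalar curvature `r` are obtained by tracing with respect to the frame. -/
structure SemiRiemannian (n : ℕ) where
  V : Type
  [instAddCommGroup : AddCommGroup V]
  [instModule : Module ℝ V]
  g : V → V → ℝ
  g_symm : ∀ X Y, g X Y = g Y X
  g_add_left : ∀ X Y Z, g (X + Y) Z = g X Z + g Y Z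
  g_smul_left : ∀ (c : ℝ) (X Y : V), g (c • X) Y = c * g X Y
  e : Fin n → V
  eps : Fin n → ℝ
  eps_unit : ∀ i, eps i = 1 ∨ eps i = -1
  g_frame : ∀ i j, g (e i) (e j) = if i = j then eps i else 0
  expand : ∀ X : V, X = ∑ i, (eps i * g X (e i)) • e i
  R : V → V → V → V
  R_add₁ : ∀ X X' Y Z, R (X + X') Y Z = R X Y Z + R X' Y Z
  R_smul₁ : ∀ (c : ℝ) (X Y Z : V), R (c • X) Y Z = c • R X Y Z
  R_add₂ : ∀ X Y Y' Z, R X (Y + Y') Z = R X Y Z + R X Y' Z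
  R_smul₂ : ∀ (c : ℝ) (X Y Z : V), R X (c • Y) Z = c • R X Y Z
  R_add₃ : ∀ X Y Z Z', R X Y (Z + Z') = R X Y Z + R X Y Z'
  R_smul₃ : ∀ (c : ℝ) (X Y Z : V), R X Y (c • Z) = c • R X Y Z
  R_alt : ∀ X Y Z, R X Y Z = - R Y X Z
  R_skew : ∀ X Y Z W, g (R X Y Z) W = - (g (R X Y W) Z)
  R_pair : ∀ X Y Z W, g (R X Y Z) W = g (R Z W X) Y
  R_bianchi : ∀ X Y Z, R X Y Z + R Y Z X + R Z X Y = 0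

attribute [instance] SemiRiemannian.instAddCommGroup SemiRiemannian.instModule

namespace SemiRiemannian

variable {n : ℕ} (M : SemiRiemannian n)

/-- The Ricci tensor `S`. -/
def S (X Y : M.V) : ℝ := ∑ i, M.eps i * M.g (M.R (M.e i) X Y) (M.e i)

/-- The Ricci operator `Q`, characterised by `g (Q X) Y = S X Y`. -/
def Q (X : M.V) : M.V := ∑ i, (M.eps i * M.S X (M.e i)) • M.e i

/-- The scalar curvature `r`. -/
def r : ℝ := ∑ i, M.eps i * M.S (M.e i) (M.e i)

/-- The `𝒯`-curvature tensor with coefficients `a₀, …, a₇`: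
`𝒯(X,Y)Z = a₀ R(X,Y)Z + a₁ S(Y,Z)X + a₂ S(X,Z)Y + a₃ S(X,Y)Z + a₄ g(Y,Z)QX
  + a₅ g(X,Z)QY + a₆ g(X,Y)QZ + a₇ r (g(Y,Z)X − g(X,Z)Y)`. -/
def T (a₀ a₁ a₂ a₃ a₄ a₅ a₆ a₇ : ℝ) (X Y Z : M.V) : M.V :=
  a₀ • M.R X Y Z + (a₁ * M.S Y Z) • X + (a₂ * M.S X Z) • Y + (a₃ * M.S X Y) • Z
    + (a₄ * M.g Y Z) • M.Q X + (a₅ * M.g X Z) • M.Q Y + (a₆ * M.g X Y) • M.Q Z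
    + (a₇ * M.r) • (M.g Y Z • X - M.g X Z • Y)

/-- The Ricci tensor `S_𝒯` of the `𝒯`-curvature tensor. -/
def ST (a₀ a₁ a₂ a₃ a₄ a₅ a₆ a₇ : ℝ) (X Y : M.V) : ℝ :=
  (a₀ + (n : ℝ) * a₁ + a₂ + a₃ + a₅ + a₆) * M.S X Y
    + (a₄ + ((n : ℝ) - 1) * a₇) * M.r * M.g X Y

/-- `ξ` belongs to the `k`-nullity distribution `N(k)`:
`R(X,Y)ξ = k (g(Y,ξ)X − g(X,ξ)Y)`. -/
def Nullity (k : ℝ) (ξ : M.V) : Prop :=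
  ∀ X Y : M.V, M.R X Y ξ = k • (M.g Y ξ • X - M.g X ξ • Y)

/-- `𝒯_a`-semisymmetry: `R(X,Y) ⬝ 𝒯_a = 0`, where `R(X,Y)` acts as a derivation
on the `(1,3)`-tensor `𝒯_a`. -/
def TSemisymmetric (a₀ a₁ a₂ a₃ a₄ a₅ a₆ a₇ : ℝ) : Prop :=
  ∀ X Y U V W : M.V,
    M.R X Y (M.T a₀ a₁ a₂ a₃ a₄ a₅ a₆ a₇ U V W)
      - M.T a₀ a₁ a₂ a₃ a₄ a₅ a₆ a₇ (M.R X Y U) V W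
      - M.T a₀ a₁ a₂ a₃ a₄ a₅ a₆ a₇ U (M.R X Y V) W
      - M.T a₀ a₁ a₂ a₃ a₄ a₅ a₆ a₇ U V (M.R X Y W) = 0


/-! Auxiliary lemmas -/

lemma g_zero_left (Y : M.V) : M.g 0 Y = 0 := by
  have := M.g_smul_left 0 0 Y; simpa using this

lemma g_sub_left (X X' Y : M.V) : M.g (X - X') Y = M.g X Y - M.g X' Y := by
  have h1 : M.g (-X') Y = - M.g X' Y := by
    have := M.g_smul_left (-1) X' Y; simpa using this
  rw [sub_eq_add_neg, M.g_add_left, h1, sub_eq_add_neg]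

lemma g_sum_left {ι : Type*} (s : Finset ι) (f : ι → M.V) (Y : M.V) :
    M.g (∑ i ∈ s, f i) Y = ∑ i ∈ s, M.g (f i) Y := by
  induction s using Finset.cons_induction with
  | empty => simpa using M.g_zero_left Y
  | cons a s ha ih => rw [Finset.sum_cons, Finset.sum_cons, M.g_add_left, ih]

lemma sum_trace (X Y : M.V) :
    ∑ i, (M.eps i * M.g X (M.e i)) * M.g (M.e i) Y = M.g X Y := by
  conv_rhs => rw [M.expand X]
  rw [M.g_sum_left]
  refine Finset.sum_congr rfl fun i _ => ?_
  rw [M.g_smul_left]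

lemma eps_sq (i : Fin n) : M.eps i * M.eps i = 1 := by
  rcases M.eps_unit i with h | h <;> rw [h] <;> norm_num

lemma S_symm (X Y : M.V) : M.S X Y = M.S Y X := by
  unfold S
  refine Finset.sum_congr rfl fun i _ => ?_
  have h : M.g (M.R (M.e i) X Y) (M.e i) = M.g (M.R (M.e i) Y X) (M.e i) := by
    rw [M.R_pair, M.R_skew, M.R_alt]
    have := M.g_smul_left (-1) (M.R (M.e i) Y X) (M.e i)
    simp only [neg_smul, one_smul] at this
    rw [this]; ring
  rw [h]


lemma S_xi (k : ℝ) (ξ : M.V)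
    (hk : ∀ X Y : M.V, M.R X Y ξ = k • (M.g Y ξ • X - M.g X ξ • Y)) (X : M.V) :
    M.S X ξ = k * ((n : ℝ) - 1) * M.g X ξ := by
  unfold S
  have key : ∀ i : Fin n, M.eps i * M.g (M.R (M.e i) X ξ) (M.e i)
      = k * M.g X ξ * (M.eps i * M.eps i) - k * ((M.eps i * M.g X (M.e i)) * M.g (M.e i) ξ) := by
    intro i
    rw [hk, M.g_smul_left, M.g_sub_left, M.g_smul_left, M.g_smul_left, M.g_frame]
    simp only [if_pos]
    ring
  rw [Finset.sum_congr rfl fun i _ => key i, Finset.sum_sub_distrib]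
  have h2 : ∑ i : Fin n, k * ((M.eps i * M.g X (M.e i)) * M.g (M.e i) ξ) = k * M.g X ξ := by
    rw [← Finset.mul_sum, M.sum_trace X ξ]
  have h1 : ∑ i : Fin n, k * M.g X ξ * (M.eps i * M.eps i) = (n : ℝ) * (k * M.g X ξ) := by
    simp [M.eps_sq, Finset.sum_const, mul_comm]
  rw [h1, h2]; ring

lemma Q_xi (k : ℝ) (ξ : M.V)
    (hk : ∀ X Y : M.V, M.R X Y ξ = k • (M.g Y ξ • X - M.g X ξ • Y)) :
    M.Q ξ = (k * ((n : ℝ) - 1)) • ξ := by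
  unfold Q
  have key : ∀ i : Fin n, (M.eps i * M.S ξ (M.e i)) • M.e i
      = (k * ((n:ℝ)-1)) • ((M.eps i * M.g ξ (M.e i)) • M.e i) := by
    intro i
    rw [M.S_symm, M.S_xi k ξ hk, M.g_symm (M.e i) ξ, smul_smul]
    ring_nf
  rw [Finset.sum_congr rfl fun i _ => key i, ← Finset.smul_sum, ← M.expand ξ]

lemma Q_of (D₂ D₃ : ℝ) (ξ : M.V)
    (hS : ∀ X Y : M.V, M.S X Y = D₂ * M.g X Y + D₃ * M.g X ξ * M.g Y ξ) (X : M.V) :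
    M.Q X = D₂ • X + (D₃ * M.g X ξ) • ξ := by
  unfold Q
  have key : ∀ i : Fin n, (M.eps i * M.S X (M.e i)) • M.e i
      = D₂ • ((M.eps i * M.g X (M.e i)) • M.e i)
        + (D₃ * M.g X ξ) • ((M.eps i * M.g ξ (M.e i)) • M.e i) := by
    intro i
    rw [hS, M.g_symm ξ (M.e i), smul_smul, smul_smul, ← add_smul]
    ring_nf
  rw [Finset.sum_congr rfl fun i _ => key i, Finset.sum_add_distrib, ← Finset.smul_sum,
    ← Finset.smul_sum, ← M.expand X, ← M.expand ξ]

lemma r_of (D₂ D₃ : ℝ) (ξ : M.V)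
    (hS : ∀ X Y : M.V, M.S X Y = D₂ * M.g X Y + D₃ * M.g X ξ * M.g Y ξ) :
    M.r = (n : ℝ) * D₂ + D₃ * M.g ξ ξ := by
  unfold r
  have key : ∀ i : Fin n, M.eps i * M.S (M.e i) (M.e i)
      = D₂ * (M.eps i * M.eps i) + D₃ * ((M.eps i * M.g ξ (M.e i)) * M.g (M.e i) ξ) := by
    intro i
    rw [hS, M.g_frame]
    simp only [if_pos]
    rw [M.g_symm (M.e i) ξ]
    ring
  rw [Finset.sum_congr rfl fun i _ => key i, Finset.sum_add_distrib]
  have h2 : ∑ i : Fin n, D₃ * ((M.eps i * M.g ξ (M.e i)) * M.g (M.e i) ξ) = D₃ * M.g ξ ξ := by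
    rw [← Finset.mul_sum, M.sum_trace ξ ξ]
  have h1 : ∑ i : Fin n, D₂ * (M.eps i * M.eps i) = (n : ℝ) * D₂ := by
    simp [M.eps_sq, Finset.sum_const, mul_comm]
  rw [h1, h2]


end SemiRiemannian

/-- Theorem 3.2: the value of `𝒯_a(X,Y)ξ` on an
`(N(k),ξ)`-semi-Riemannian manifold satisfying `S = D₂ g + D₃ η⊗η`. -/
theorem Ta_of_eta_Einstein
    (n : ℕ) (M : SemiRiemannian n) (k ε : ℝ) (ξ : M.V) (η : M.V → ℝ)
    (hε : ε = 1 ∨ ε = -1) (hξ : M.g ξ ξ = ε)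
    (hη : ∀ X : M.V, η X = ε * M.g X ξ)
    (hk : M.Nullity k ξ)
    (a₀ a₁ a₂ a₃ a₄ a₅ a₆ a₇ : ℝ)
    (ha₄ : a₄ ≠ 0) (ha₄₇ : a₄ + ((n : ℝ) - 1) * a₇ ≠ 0)
    (D₁ D₂ D₃ : ℝ)
    (hD₂ : D₂ = -((k * a₀ + k * ((n : ℝ) - 1) * a₁ + a₇ * M.r) / a₄))
    (hD₃ : D₃ = (k * a₀ - ((n : ℝ) - 1) * k * (a₂ + a₃ + a₅ + a₆) + a₇ * M.r) / (ε * a₄))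
    (hD₁ : D₁ = -(k * ((n : ℝ) - 1) * (a₀ + (n : ℝ) * a₁ + a₂ + a₃ + a₅ + a₆))
        / (a₄ + ((n : ℝ) - 1) * a₇))
    (hS : ∀ X Y : M.V, M.S X Y = D₂ * M.g X Y + D₃ * η X * η Y) :
    ∀ X Y : M.V, M.T a₀ a₁ a₂ a₃ a₄ a₅ a₆ a₇ X Y ξ =
      ((ε * k * a₀ + ε * k * ((n : ℝ) - 1) * a₁ + ε * a₄ * D₂ + ε * a₇ * D₁) * η Y) • X
        + ((-(ε * k * a₀) + ε * k * ((n : ℝ) - 1) * a₂ + ε * a₅ * D₂ - ε * a₇ * D₁) * η X) • Y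
        + ((k * ((n : ℝ) - 1) * a₆ + a₃ * D₂) * M.g X Y) • ξ
        + ((a₃ + a₄ + a₅) * D₃ * η X * η Y) • ξ := by
  intro X Y
  rcases hε with rfl | rfl
  all_goals
    have hS' : ∀ A B : M.V, M.S A B = D₂ * M.g A B + D₃ * M.g A ξ * M.g B ξ := by
      intro A B; rw [hS A B, hη A, hη B]; ring
    have hr : M.r = D₁ := by
      have h := M.r_of D₂ D₃ ξ hS'
      have hd2 : D₂ * a₄ = -(k * a₀ + k * ((n : ℝ) - 1) * a₁ + a₇ * M.r) := by
        rw [hD₂]; field_simp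
      have hd3 : D₃ * M.g ξ ξ * a₄
          = k * a₀ - ((n : ℝ) - 1) * k * (a₂ + a₃ + a₅ + a₆) + a₇ * M.r := by
        have h3 := hD₃
        rw [eq_div_iff (by simp [ha₄])] at h3
        rw [hξ]; linear_combination h3
      rw [hD₁, eq_div_iff ha₄₇]
      linear_combination a₄ * h + (n : ℝ) * hd2 + hd3
    simp only [SemiRiemannian.T]
    rw [hk X Y, M.S_xi k ξ hk Y, M.S_xi k ξ hk X, hS X Y, M.Q_of D₂ D₃ ξ hS' X,
      M.Q_of D₂ D₃ ξ hS' Y, M.Q_xi k ξ hk, hr]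
    simp only [hη]
    match_scalars <;> ring
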